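/- Let A ∈ ℝ^{m×n}, b ∈ ℝᵐ, τ > 0, ν > 0, w ∈ ℝⁿ, and let B ∈ ℝ^{n×n} be symmetric such that Q := ν B + I is positive definite. (i) If there exists y ∈ ℝᵐ with (A Q⁻¹ Aᵀ) y = A Q⁻¹ w + b and ‖y‖₂ ≤ ν τ, then Q⁻¹(w − Aᵀ y) is a global minimizer of u ↦ (1/(2ν))‖u − w‖₂² + τ‖A u + b‖₂ + (1/2) uᵀ B u over ℝⁿ. (ii) If α* > 0 satisfies ‖(A Q⁻¹ Aᵀ + α* I)⁻¹ (A Q⁻¹ w + b)‖₂ = ν τ, then Q⁻¹(w − Aᵀ (A Q⁻¹ Aᵀ + α* I)⁻¹ (A Q⁻¹ w + b)) is the unique global minimizer of u ↦ (1/(2ν))‖u − w‖₂² + τ‖A u + b‖₂ + (1/2) uᵀ B u over ℝⁿ. -/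

import Mathlib

/-! With `Q x = w - Aᵀ y`, completing the square in the objective `F` gives
  `2ν (F u - F x) = (u - x)ᵀ Q (u - x) + 2 (ντ ‖Au + b‖ - y ⬝ (Au + b))`
  `                - 2 (ντ ‖Ax + b‖ - y ⬝ (Ax + b))`.
When `‖y‖ ≤ ντ` the middle term is nonnegative by Cauchy–Schwarz, so if the last one vanishes,
`x` minimizes `F`, strictly when `Q` is positive definite. In (i) `Ax + b = 0`; in (ii)
`Ax + b = α* y` with `‖y‖ = ντ`. -/

open Matrix

/-- The Euclidean (`ℓ₂`) norm of a vector in `Fin k → ℝ`. -/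
noncomputable def norm2 {k : ℕ} (v : Fin k → ℝ) : ℝ := Real.sqrt (∑ i, v i ^ 2)

/-- Quadratic proximal objective `u ↦ (1/(2ν))‖u − w‖₂² + τ‖Au + b‖₂ + (1/2)uᵀBu`. -/
noncomputable def proxObjQ {m n : ℕ} (A : Matrix (Fin m) (Fin n) ℝ) (b : Fin m → ℝ)
    (τ ν : ℝ) (w : Fin n → ℝ) (B : Matrix (Fin n) (Fin n) ℝ) (u : Fin n → ℝ) : ℝ :=
  1 / (2 * ν) * norm2 (u - w) ^ 2 + τ * norm2 (A.mulVec u + b) + 1 / 2 * (u ⬝ᵥ B.mulVec u)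

lemma norm2_sq {k : ℕ} (v : Fin k → ℝ) : norm2 v ^ 2 = v ⬝ᵥ v := by
  rw [norm2, Real.sq_sqrt (by positivity)]
  simp only [dotProduct, sq]

lemma norm2_smul {k : ℕ} {c : ℝ} (hc : 0 ≤ c) (v : Fin k → ℝ) :
    norm2 (c • v) = c * norm2 v := by
  simp only [norm2, Pi.smul_apply, smul_eq_mul, mul_pow, ← Finset.mul_sum]
  rw [Real.sqrt_mul (sq_nonneg c), Real.sqrt_sq hc]

lemma dotProduct_le_norm2_mul_norm2 {k : ℕ} (x y : Fin k → ℝ) :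
    x ⬝ᵥ y ≤ norm2 x * norm2 y :=
  Real.sum_mul_le_sqrt_mul_sqrt _ x y

lemma Matrix.IsSymm.sub_dotProduct_mulVec_sub {ι R : Type*} [Fintype ι] [CommRing R]
    {Q : Matrix ι ι R} (hQ : Q.IsSymm) (u x : ι → R) :
    (u - x) ⬝ᵥ Q *ᵥ (u - x) = u ⬝ᵥ Q *ᵥ u - 2 * (u ⬝ᵥ Q *ᵥ x) + x ⬝ᵥ Q *ᵥ x := by
  have hsymm : x ⬝ᵥ Q *ᵥ u = u ⬝ᵥ Q *ᵥ x := by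
    rw [dotProduct_mulVec, ← mulVec_transpose, hQ.eq, dotProduct_comm]
  rw [mulVec_sub, dotProduct_sub, sub_dotProduct, sub_dotProduct, hsymm]
  ring

section ProxObjQ

variable {m n : ℕ} (A : Matrix (Fin m) (Fin n) ℝ) (b : Fin m → ℝ) (τ ν : ℝ) (w : Fin n → ℝ)
  {B Q : Matrix (Fin n) (Fin n) ℝ}

lemma proxObjQ_eq (hν : ν ≠ 0) (hQ : Q = ν • B + 1) (u : Fin n → ℝ) :
    proxObjQ A b τ ν w B u =
      1 / (2 * ν) * (u ⬝ᵥ Q *ᵥ u - 2 * (u ⬝ᵥ w) + w ⬝ᵥ w) + τ * norm2 (A *ᵥ u + b) := by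
  have hQu : u ⬝ᵥ Q *ᵥ u = ν * (u ⬝ᵥ B *ᵥ u) + u ⬝ᵥ u := by
    rw [hQ, add_mulVec, smul_mulVec, one_mulVec, dotProduct_add, dotProduct_smul, smul_eq_mul]
  have huw : (u - w) ⬝ᵥ (u - w) = u ⬝ᵥ u - 2 * (u ⬝ᵥ w) + w ⬝ᵥ w := by
    rw [dotProduct_sub, sub_dotProduct, sub_dotProduct, dotProduct_comm w u]
    ring
  rw [proxObjQ, norm2_sq, huw, hQu]
  field_simp
  ring

lemma proxObjQ_add_le (hν : 0 < ν) (hQ : Q = ν • B + 1) (hQsymm : Q.IsSymm)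
    {x : Fin n → ℝ} {y : Fin m → ℝ} (hx : Q *ᵥ x = w - Aᵀ *ᵥ y) (hy : norm2 y ≤ ν * τ)
    (hslack : ν * τ * norm2 (A *ᵥ x + b) ≤ y ⬝ᵥ (A *ᵥ x + b)) (u : Fin n → ℝ) :
    proxObjQ A b τ ν w B x + 1 / (2 * ν) * ((u - x) ⬝ᵥ Q *ᵥ (u - x)) ≤
      proxObjQ A b τ ν w B u := by
  have hw : ∀ z, z ⬝ᵥ w = z ⬝ᵥ Q *ᵥ x + y ⬝ᵥ (A *ᵥ z + b) - y ⬝ᵥ b := fun z => by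
    rw [hx, dotProduct_sub, dotProduct_mulVec, vecMul_transpose, dotProduct_comm (A *ᵥ z),
      dotProduct_add]
    ring
  have hcs : y ⬝ᵥ (A *ᵥ u + b) ≤ ν * τ * norm2 (A *ᵥ u + b) :=
    (dotProduct_le_norm2_mul_norm2 _ _).trans
      (mul_le_mul_of_nonneg_right hy (Real.sqrt_nonneg _))
  rw [proxObjQ_eq A b τ ν w hν.ne' hQ, proxObjQ_eq A b τ ν w hν.ne' hQ,
    hQsymm.sub_dotProduct_mulVec_sub, hw u, hw x]
  field_simp
  linarith

lemma proxObjQ_le_of_certificate (hν : 0 < ν) (hQ : Q = ν • B + 1) (hQpsd : Q.PosSemidef)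
    {x : Fin n → ℝ} {y : Fin m → ℝ} (hx : Q *ᵥ x = w - Aᵀ *ᵥ y) (hy : norm2 y ≤ ν * τ)
    (hslack : ν * τ * norm2 (A *ᵥ x + b) ≤ y ⬝ᵥ (A *ᵥ x + b)) (u : Fin n → ℝ) :
    proxObjQ A b τ ν w B x ≤ proxObjQ A b τ ν w B u := by
  have hmin := proxObjQ_add_le A b τ ν w hν hQ (isHermitian_iff_isSymm.mp hQpsd.isHermitian)
    hx hy hslack u
  have hD : 0 ≤ (u - x) ⬝ᵥ Q *ᵥ (u - x) := by
    simpa using hQpsd.dotProduct_mulVec_nonneg (u - x)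
  have : 0 ≤ 1 / (2 * ν) * ((u - x) ⬝ᵥ Q *ᵥ (u - x)) := mul_nonneg (by positivity) hD
  linarith

lemma proxObjQ_lt_of_certificate (hν : 0 < ν) (hQ : Q = ν • B + 1) (hQpd : Q.PosDef)
    {x : Fin n → ℝ} {y : Fin m → ℝ} (hx : Q *ᵥ x = w - Aᵀ *ᵥ y) (hy : norm2 y ≤ ν * τ)
    (hslack : ν * τ * norm2 (A *ᵥ x + b) ≤ y ⬝ᵥ (A *ᵥ x + b)) {u : Fin n → ℝ} (hu : u ≠ x) :
    proxObjQ A b τ ν w B x < proxObjQ A b τ ν w B u := by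
  have hmin := proxObjQ_add_le A b τ ν w hν hQ (isHermitian_iff_isSymm.mp hQpd.isHermitian)
    hx hy hslack u
  have hD : 0 < (u - x) ⬝ᵥ Q *ᵥ (u - x) := by
    simpa using hQpd.dotProduct_mulVec_pos (sub_ne_zero.mpr hu)
  have : 0 < 1 / (2 * ν) * ((u - x) ⬝ᵥ Q *ᵥ (u - x)) := mul_pos (by positivity) hD
  linarith

end ProxObjQ

lemma mulVec_inv_mulVec_of_isUnit {ι R : Type*} [Fintype ι] [DecidableEq ι] [CommRing R]
    {M : Matrix ι ι R} (hM : IsUnit M) (v : ι → R) : M *ᵥ (M⁻¹ *ᵥ v) = v := by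
  rw [mulVec_mulVec, mul_nonsing_inv M (M.isUnit_iff_isUnit_det.mp hM), one_mulVec]

lemma mulVec_mulVec_sub_transpose_mulVec_add {ι κ R : Type*} [Fintype ι] [Fintype κ]
    [CommRing R] (A : Matrix κ ι R) (P : Matrix ι ι R) (w : ι → R) (y b : κ → R) :
    A *ᵥ (P *ᵥ (w - Aᵀ *ᵥ y)) + b = A *ᵥ (P *ᵥ w) + b - (A * P * Aᵀ) *ᵥ y := by
  rw [mulVec_sub, mulVec_sub, mulVec_mulVec, mulVec_mulVec, mulVec_mulVec]
  abel

theorem stmt_17_general {m n : ℕ} (A : Matrix (Fin m) (Fin n) ℝ) (b : Fin m → ℝ)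
    (τ ν : ℝ) (hν : 0 < ν) (w : Fin n → ℝ)
    (B : Matrix (Fin n) (Fin n) ℝ)
    (Q : Matrix (Fin n) (Fin n) ℝ) (hQ : Q = ν • B + 1) (hQpd : Q.PosDef) :
    (∀ y : Fin m → ℝ, (A * Q⁻¹ * Aᵀ).mulVec y = A.mulVec (Q⁻¹.mulVec w) + b →
      norm2 y ≤ ν * τ →
      ∀ u : Fin n → ℝ,
        proxObjQ A b τ ν w B (Q⁻¹.mulVec (w - Aᵀ.mulVec y)) ≤ proxObjQ A b τ ν w B u) ∧
    (∀ αstar : ℝ, 0 < αstar →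
      norm2 ((A * Q⁻¹ * Aᵀ + αstar • (1 : Matrix (Fin m) (Fin m) ℝ))⁻¹.mulVec
          (A.mulVec (Q⁻¹.mulVec w) + b)) = ν * τ →
      ∀ u : Fin n → ℝ,
        u ≠ Q⁻¹.mulVec (w - Aᵀ.mulVec ((A * Q⁻¹ * Aᵀ + αstar •
              (1 : Matrix (Fin m) (Fin m) ℝ))⁻¹.mulVec (A.mulVec (Q⁻¹.mulVec w) + b))) →
        proxObjQ A b τ ν w B (Q⁻¹.mulVec (w - Aᵀ.mulVec ((A * Q⁻¹ * Aᵀ + αstar •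
              (1 : Matrix (Fin m) (Fin m) ℝ))⁻¹.mulVec (A.mulVec (Q⁻¹.mulVec w) + b))))
          < proxObjQ A b τ ν w B u) := by
  have hQx : ∀ v, Q *ᵥ (Q⁻¹ *ᵥ v) = v := mulVec_inv_mulVec_of_isUnit hQpd.isUnit
  constructor
  · intro y hy hyτ u
    have hres : A *ᵥ (Q⁻¹ *ᵥ (w - Aᵀ *ᵥ y)) + b = 0 := by
      rw [mulVec_mulVec_sub_transpose_mulVec_add, hy, sub_self]
    exact proxObjQ_le_of_certificate A b τ ν w hν hQ hQpd.posSemidef (hQx _) hyτ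
      (by rw [hres]; simp [norm2]) u
  · intro α hα hyτ u hu
    set M := A * Q⁻¹ * Aᵀ + α • (1 : Matrix (Fin m) (Fin m) ℝ)
    have hM : M.PosDef := by
      refine PosDef.posSemidef_add ?_ (PosDef.one.smul hα)
      simpa using hQpd.posSemidef.inv.mul_mul_conjTranspose_same A
    set y := M⁻¹ *ᵥ (A *ᵥ (Q⁻¹ *ᵥ w) + b)
    have hres : A *ᵥ (Q⁻¹ *ᵥ (w - Aᵀ *ᵥ y)) + b = α • y := by
      rw [mulVec_mulVec_sub_transpose_mulVec_add,
        ← mulVec_inv_mulVec_of_isUnit hM.isUnit (A *ᵥ (Q⁻¹ *ᵥ w) + b)]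
      simp only [M, add_mulVec, smul_mulVec, one_mulVec]
      abel
    refine proxObjQ_lt_of_certificate A b τ ν w hν hQ hQpd (hQx _) hyτ.le ?_ hu
    rw [hres, norm2_smul hα.le, dotProduct_smul, smul_eq_mul, ← norm2_sq, hyτ]
    exact le_of_eq (by ring)

/-- **Corollary `cor:prox-quadratic` (proximal operator with a quadratic term).**
Let `B = Bᵀ` and `Q := νB + I` be positive definite.
(i) If `(AQ⁻¹Aᵀ)y = AQ⁻¹w + b` with `‖y‖₂ ≤ ντ`, then `Q⁻¹(w − Aᵀy)` is a global minimizer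
of `u ↦ (1/(2ν))‖u − w‖₂² + τ‖Au + b‖₂ + (1/2)uᵀBu`.
(ii) If `α* > 0` with `‖(AQ⁻¹Aᵀ + α*I)⁻¹(AQ⁻¹w + b)‖₂ = ντ`, then
`Q⁻¹(w − Aᵀ(AQ⁻¹Aᵀ + α*I)⁻¹(AQ⁻¹w + b))` is its unique global minimizer. -/
theorem stmt_17 {m n : ℕ} (A : Matrix (Fin m) (Fin n) ℝ) (b : Fin m → ℝ)
    (τ ν : ℝ) (hτ : 0 < τ) (hν : 0 < ν) (w : Fin n → ℝ)
    (B : Matrix (Fin n) (Fin n) ℝ) (hB : B.IsSymm)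
    (Q : Matrix (Fin n) (Fin n) ℝ) (hQ : Q = ν • B + 1) (hQpd : Q.PosDef) :
    (∀ y : Fin m → ℝ, (A * Q⁻¹ * Aᵀ).mulVec y = A.mulVec (Q⁻¹.mulVec w) + b →
      norm2 y ≤ ν * τ →
      ∀ u : Fin n → ℝ,
        proxObjQ A b τ ν w B (Q⁻¹.mulVec (w - Aᵀ.mulVec y)) ≤ proxObjQ A b τ ν w B u) ∧
    (∀ αstar : ℝ, 0 < αstar →
      norm2 ((A * Q⁻¹ * Aᵀ + αstar • (1 : Matrix (Fin m) (Fin m) ℝ))⁻¹.mulVec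
          (A.mulVec (Q⁻¹.mulVec w) + b)) = ν * τ →
      ∀ u : Fin n → ℝ,
        u ≠ Q⁻¹.mulVec (w - Aᵀ.mulVec ((A * Q⁻¹ * Aᵀ + αstar •
              (1 : Matrix (Fin m) (Fin m) ℝ))⁻¹.mulVec (A.mulVec (Q⁻¹.mulVec w) + b))) →
        proxObjQ A b τ ν w B (Q⁻¹.mulVec (w - Aᵀ.mulVec ((A * Q⁻¹ * Aᵀ + αstar •
              (1 : Matrix (Fin m) (Fin m) ℝ))⁻¹.mulVec (A.mulVec (Q⁻¹.mulVec w) + b))))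
          < proxObjQ A b τ ν w B u) :=
  stmt_17_general A b τ ν hν w B Q hQ hQpd
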